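/- arXiv:2105.08731 — 3 statements merged into one kernel-verified Lean document; each statement's English description precedes it below -/
import Mathlib

section
/- Let δ > 1 and let (ω_N)_{N dyadic} be a sequence of positive reals indexed by dyadic numbers N = 2^n (n ∈ ℕ) satisfying ω_N ≤ ω_{2N} ≤ δ ω_N for all N ≥ 1 and ω_N → ∞ as N → ∞. Then for any δ' with 1 < δ' < δ there exists a dyadic sequence (ω̃_N) of positive reals such that ω̃_N ≤ ω_N, ω̃_N ≤ ω̃_{2N} ≤ δ' ω̃_N for all N ≥ 1, and ω̃_N → ∞ as N → ∞. -/
open Filter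

/-- Taming a frequency envelope. A dyadic sequence `(ω_{2^n})` is modelled
by `ω : ℕ → ℝ` (the value at `n` being `ω_{2^n}`). -/
theorem envelope_taming (δ : ℝ) (hδ : 1 < δ) (ω : ℕ → ℝ)
    (hpos : ∀ n, 0 < ω n)
    (hmono : ∀ n, ω n ≤ ω (n + 1))
    (hgrow : ∀ n, ω (n + 1) ≤ δ * ω n)
    (hlim : Tendsto ω atTop atTop)
    (δ' : ℝ) (hδ'1 : 1 < δ') (hδ'2 : δ' < δ) :
    ∃ ω' : ℕ → ℝ,
      (∀ n, 0 < ω' n) ∧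
      (∀ n, ω' n ≤ ω n) ∧
      (∀ n, ω' n ≤ ω' (n + 1)) ∧
      (∀ n, ω' (n + 1) ≤ δ' * ω' n) ∧
      Tendsto ω' atTop atTop := by
  obtain ⟨f, hf0, hfs⟩ : ∃ f : ℕ → ℝ, f 0 = ω 0 ∧
      ∀ n, f (n + 1) = min (ω (n + 1)) (δ' * f n) :=
    ⟨fun n => Nat.rec (ω 0) (fun n ih => min (ω (n + 1)) (δ' * ih)) n, rfl, fun n => rfl⟩
  have hδ'0 : (0 : ℝ) < δ' := lt_trans one_pos hδ'1
  have hfpos : ∀ n, 0 < f n := by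
    intro n
    induction n with
    | zero => rw [hf0]; exact hpos 0
    | succ n ih => rw [hfs]; exact lt_min (hpos _) (mul_pos hδ'0 ih)
  have hfle : ∀ n, f n ≤ ω n := by
    intro n
    cases n with
    | zero => rw [hf0]
    | succ n => rw [hfs]; exact min_le_left _ _
  have hfmono : ∀ n, f n ≤ f (n + 1) := by
    intro n
    rw [hfs]
    refine le_min ((hfle n).trans (hmono n)) ?_
    nlinarith [hfpos n]
  refine ⟨f, hfpos, hfle, hfmono, fun n => (hfs n).symm ▸ min_le_right _ _, ?_⟩
  rw [tendsto_atTop]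
  intro b
  set b' : ℝ := max b 0 with hb'
  have hb'0 : 0 ≤ b' := le_max_right _ _
  -- pick k₀ with ω k ≥ b' for k ≥ k₀
  obtain ⟨k₀, hk₀⟩ := eventually_atTop.1 (tendsto_atTop.1 hlim b')
  have key : ∀ m, min b' (δ' ^ m * f k₀) ≤ f (k₀ + m) := by
    intro m
    induction m with
    | zero => simpa using min_le_right b' (f k₀)
    | succ m ih =>
      have : f (k₀ + m + 1) = min (ω (k₀ + m + 1)) (δ' * f (k₀ + m)) := hfs _
      rw [show k₀ + (m + 1) = k₀ + m + 1 from rfl, this]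
      refine le_min ((min_le_left _ _).trans (hk₀ _ (by omega))) ?_
      calc min b' (δ' ^ (m + 1) * f k₀)
            ≤ min (δ' * b') (δ' * (δ' ^ m * f k₀)) := by
              refine le_min ?_ ?_
              · exact (min_le_left _ _).trans (le_mul_of_one_le_left hb'0 hδ'1.le)
              · apply (min_le_right _ _).trans_eq; ring
          _ = δ' * min b' (δ' ^ m * f k₀) := (mul_min_of_nonneg _ _ hδ'0.le).symm
          _ ≤ δ' * f (k₀ + m) := by nlinarith
  have hpow : Tendsto (fun m => δ' ^ m * f k₀) atTop atTop :=
    (tendsto_pow_atTop_atTop_of_one_lt hδ'1).atTop_mul_const (hfpos k₀)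
  obtain ⟨m₀, hm₀⟩ := eventually_atTop.1 (tendsto_atTop.1 hpow b')
  refine eventually_atTop.2 ⟨k₀ + m₀, fun n hn => ?_⟩
  obtain ⟨m, rfl⟩ : ∃ m, n = k₀ + m := ⟨n - k₀, by omega⟩
  have := key m
  have h1 : b' ≤ δ' ^ m * f k₀ := hm₀ m (by omega)
  have : b' ≤ f (k₀ + m) := by
    calc b' = min b' b' := (min_self _).symm
    _ ≤ min b' (δ' ^ m * f k₀) := by exact le_min (min_le_left _ _) ((min_le_left _ _).trans h1)
    _ ≤ _ := key m
  exact (le_max_left b 0).trans this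
end

section
/- Let 1 ≤ α ≤ 2 and let p : ℝ → ℝ be an odd function in C¹(ℝ) ∩ C²(ℝ∖{0}) such that p'(ξ) ∼ ξ^α and p''(ξ) ∼ ξ^{α−1} for all ξ ≥ ξ₀ (for some ξ₀ > 0). Let k ≥ 2 and let (ξ₁,…,ξ_{k+2}) ∈ ℤ^{k+2} satisfy ∑_{j=1}^{k+2} ξ_j = 0 and |ξ₁| ∼ |ξ₂| ≳ |ξ₃| ≫ k·max_{j≥4}|ξ_j|. Then the resonance function Ω = ∑_{j=1}^{k+2} p(ξ_j) satisfies |Ω| ≳ |ξ₃| |ξ₁|^α, provided |ξ₁| ≫ (max_{ξ∈[0,ξ₀]}|p'(ξ)|)^{1/α}. -/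
/-!
Where `|p''(ξ)| ≳ ξ^(α-1)` it cannot vanish, so by Darboux's theorem `p''` has one sign on
`(ξ₀, ∞)`, and it is positive because `p'` is unbounded above. Integrating `p'' ≳ ξ^(α-1)` gives
`p'(x + t) - p'(t) ≳ x^α` for all `t ≥ 0` once `x` is large, and integrating once more,
`p(x + y) - p x - p y ≳ x^α y` for `y ≥ 0`.

Put `w = ξ₃ + ∑_{j≥4} ξ_j = -(ξ₁ + ξ₂)`. Two of the three numbers `ξ₁, ξ₂, w` have the same sign,
and for such a pair `x, y` oddness turns `|p ξ₁ + p ξ₂ + p w|` into `|p(|x| + |y|) - p|x| - p|y||`,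
which is `≳ |ξ₃| |ξ₁|^α` whichever pair it is. What is left of `Ω`, namely `p ξ₃ - p w` and
`∑_{j≥4} p ξ_j`, is at most `sup |p'| · ∑_{j≥4} |ξ_j| ≲ |ξ₁|^α |ξ₃| / K` by the mean value theorem.
-/

open Set Filter

theorem deriv_pos_of_deriv_ne_zero_of_tendsto_atTop {f : ℝ → ℝ} {a : ℝ}
    (hd : ∀ x ∈ Ioi a, DifferentiableAt ℝ f x) (hne : ∀ x ∈ Ioi a, deriv f x ≠ 0)
    (hf : Tendsto f atTop atTop) : ∀ x ∈ Ioi a, 0 < deriv f x := by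
  refine (hasDerivWithinAt_forall_lt_or_forall_gt_of_forall_ne (convex_Ioi a)
    (fun x hx => (hd x hx).hasDerivAt.hasDerivWithinAt) hne).resolve_left fun hneg => ?_
  have hanti : StrictAntiOn f (Ioi a) := strictAntiOn_of_deriv_neg (convex_Ioi a)
    (fun x hx => (hd x hx).continuousAt.continuousWithinAt) (by rwa [interior_Ioi])
  obtain ⟨y, hay, hfy⟩ :=
    ((eventually_gt_atTop (a + 1)).and (hf.eventually_gt_atTop (f (a + 1)))).exists
  exact (hanti (by simp) (by simp; linarith) hay).not_gt hfy

theorem monotoneOn_sub_const_mul_rpow {f : ℝ → ℝ} {α c ξ₀ : ℝ} (hα : 0 < α) (hξ₀ : 0 ≤ ξ₀)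
    (hf : ContinuousOn f (Ici ξ₀)) (hd : ∀ x ∈ Ioi ξ₀, DifferentiableAt ℝ f x)
    (hf' : ∀ x ∈ Ioi ξ₀, c * x ^ (α - 1) ≤ deriv f x) :
    MonotoneOn (fun x => f x - c / α * x ^ α) (Ici ξ₀) := by
  refine monotoneOn_of_hasDerivWithinAt_nonneg (f' := fun x => deriv f x - c * x ^ (α - 1))
    (convex_Ici ξ₀) (hf.sub (continuousOn_const.mul (continuousOn_id.rpow_const
      fun x _ => Or.inr hα.le))) (fun x hx => ?_) fun x hx => ?_
  · rw [interior_Ici] at hx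
    have hpow := (Real.hasDerivAt_rpow_const (p := α) (Or.inl (hξ₀.trans_lt hx).ne')).const_mul
      (c / α)
    rw [show c / α * (α * x ^ (α - 1)) = c * x ^ (α - 1) by field_simp] at hpow
    exact ((hd x hx).hasDerivAt.sub hpow).hasDerivWithinAt
  · rw [interior_Ici] at hx
    exact sub_nonneg.2 (hf' x hx)

theorem mul_le_add_sub_sub_of_le_deriv_sub {f : ℝ → ℝ} (hf : Differentiable ℝ f) {x y m : ℝ}
    (hy : 0 ≤ y) (h : ∀ t ∈ Ioo 0 y, m ≤ deriv f (x + t) - deriv f t) :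
    m * y ≤ f (x + y) - f x - f y + f 0 := by
  have hmono : MonotoneOn (fun t => f (x + t) - f t - m * t) (Icc 0 y) := by
    refine monotoneOn_of_hasDerivWithinAt_nonneg (f' := fun t => deriv f (x + t) - deriv f t - m)
      (convex_Icc 0 y) (by have := hf.continuous; fun_prop) (fun t _ => ?_) fun t ht => ?_
    · have := ((hf (x + t)).hasDerivAt.comp_const_add x t).sub (hf t).hasDerivAt
      exact (this.sub ((hasDerivAt_id t).const_mul m |>.congr_deriv (mul_one m))).hasDerivWithinAt
    · rw [interior_Icc] at ht
      exact sub_nonneg.2 (h t ht)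
  have := hmono (left_mem_Icc.2 hy) (right_mem_Icc.2 hy) hy
  simp only [add_zero, mul_zero, sub_zero] at this
  linarith

theorem Function.Odd.deriv {f : ℝ → ℝ} (hf : f.Odd) : (deriv f).Even := fun x => by
  have h := deriv_comp_neg (f := f) (x := x)
  simp only [hf.eq, deriv.fun_neg] at h
  linarith

theorem Function.Odd.abs_add_add_eq_abs_add_sub_sub {f : ℝ → ℝ} (hf : f.Odd) {x y z : ℝ}
    (h : x + y + z = 0) (hxy : 0 ≤ x * y) :
    |f x + f y + f z| = |f (|x| + |y|) - f (|x|) - f (|y|)| := by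
  rcases mul_nonneg_iff.1 hxy with ⟨hx, hy⟩ | ⟨hx, hy⟩
  · rw [abs_of_nonneg hx, abs_of_nonneg hy, show z = -(x + y) by linarith, hf.eq, ← abs_neg]
    ring_nf
  · rw [abs_of_nonpos hx, abs_of_nonpos hy, show z = -x + -y by linarith, hf.eq x, hf.eq y]
    ring_nf

theorem mul_le_rpow_of_mul_rpow_one_div_le {K M N α : ℝ} (hK : 1 ≤ K) (hα : 1 ≤ α)
    (hM : 0 ≤ M) (h : K * M ^ (1 / α) ≤ N) : K * M ≤ N ^ α := by
  have hα0 : 0 < α := one_pos.trans_le hα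
  calc K * M ≤ K ^ α * M := mul_le_mul_of_nonneg_right (Real.self_le_rpow_of_one_le hK hα) hM
    _ = (K * M ^ (1 / α)) ^ α := by
      rw [Real.mul_rpow (by linarith) (by positivity), ← Real.rpow_mul hM,
        one_div_mul_cancel hα0.ne', Real.rpow_one]
    _ ≤ N ^ α := Real.rpow_le_rpow (by positivity) h hα0.le

theorem sum_abs_le_div_of_mul_mul_abs_le {ι : Type*} [Fintype ι] {x : ι → ℝ} {K n y : ℝ}
    (hK : 0 < K) (hn : 0 < n) (hcard : (Fintype.card ι : ℝ) ≤ n) (hy : 0 ≤ y)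
    (h : ∀ i, K * n * |x i| ≤ y) : ∑ i, |x i| ≤ y / K := by
  rw [le_div_iff₀ hK]
  refine le_of_mul_le_mul_left ?_ hn
  calc n * ((∑ i, |x i|) * K) = ∑ i, K * n * |x i| := by
        simp only [Finset.mul_sum, Finset.sum_mul]
        exact Finset.sum_congr rfl fun i _ => by ring
    _ ≤ ∑ _i : ι, y := Finset.sum_le_sum fun i _ => h i
    _ = Fintype.card ι * y := by simp
    _ ≤ n * y := by gcongr

theorem Fin.sum_univ_succ_succ_succ {M : Type*} [AddCommMonoid M] {m : ℕ} (f : Fin (m + 3) → M) :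
    ∑ j, f j = f 0 + f 1 + f 2 + ∑ i : Fin m, f i.succ.succ.succ := by
  simp only [Fin.sum_univ_succ, add_assoc]
  rfl

section

variable {p : ℝ → ℝ} {α ξ₀ c₁ C₁ M : ℝ}

theorem mul_rpow_le_deriv_deriv (hα : 0 < α) (hξ₀ : 0 ≤ ξ₀) (hc₁ : 0 < c₁)
    (hd : ∀ ξ ∈ Ioi ξ₀, DifferentiableAt ℝ (deriv p) ξ)
    (hp' : ∀ ξ, ξ₀ ≤ ξ → c₁ * ξ ^ α ≤ deriv p ξ)
    (hp'' : ∀ ξ, ξ₀ ≤ ξ → c₁ * ξ ^ (α - 1) ≤ |deriv (deriv p) ξ|) :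
    ∀ ξ ∈ Ioi ξ₀, c₁ * ξ ^ (α - 1) ≤ deriv (deriv p) ξ := by
  have hlow : ∀ ξ ∈ Ioi ξ₀, 0 < c₁ * ξ ^ (α - 1) := fun ξ hξ =>
    mul_pos hc₁ (Real.rpow_pos_of_pos (hξ₀.trans_lt hξ) _)
  have hpos := deriv_pos_of_deriv_ne_zero_of_tendsto_atTop hd
    (fun ξ hξ => abs_pos.1 ((hlow ξ hξ).trans_le (hp'' ξ hξ.le)))
    (tendsto_atTop_mono' atTop ((eventually_ge_atTop ξ₀).mono hp')
      ((tendsto_rpow_atTop hα).const_mul_atTop hc₁))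
  intro ξ hξ
  simpa only [abs_of_pos (hpos ξ hξ)] using hp'' ξ hξ.le

theorem mul_rpow_le_deriv_add_sub_deriv (hα : 1 ≤ α) (hξ₀ : 0 < ξ₀) (hc₁ : 0 < c₁)
    (hC1 : ContDiff ℝ 1 p) (hC2 : ContDiffOn ℝ 2 p {x | x ≠ 0})
    (hp' : ∀ ξ, ξ₀ ≤ ξ → c₁ * ξ ^ α ≤ deriv p ξ)
    (hp'' : ∀ ξ, ξ₀ ≤ ξ → c₁ * ξ ^ (α - 1) ≤ |deriv (deriv p) ξ|)
    (hM : ∀ ξ ∈ Icc 0 ξ₀, |deriv p ξ| ≤ M) {x t : ℝ} (hx : 0 ≤ x) (hxM : 2 * M ≤ c₁ * x ^ α)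
    (ht : 0 ≤ t) : c₁ / (2 * α) * x ^ α ≤ deriv p (x + t) - deriv p t := by
  have hα0 : 0 < α := one_pos.trans_le hα
  have hκ : c₁ / (2 * α) ≤ c₁ / α ∧ c₁ / (2 * α) ≤ c₁ / 2 :=
    ⟨div_le_div_of_nonneg_left hc₁.le hα0 (by linarith),
      div_le_div_of_nonneg_left hc₁.le two_pos (by linarith)⟩
  have hxα : 0 ≤ x ^ α := Real.rpow_nonneg hx α
  have hMξ₀ : c₁ * ξ₀ ^ α ≤ M :=
    (hp' ξ₀ le_rfl).trans ((le_abs_self _).trans (hM ξ₀ ⟨hξ₀.le, le_rfl⟩))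
  have hξ₀x : ξ₀ ≤ x := by
    refine (Real.rpow_le_rpow_iff hξ₀.le hx hα0).1 (le_of_mul_le_mul_left ?_ hc₁)
    nlinarith [Real.rpow_pos_of_pos hξ₀ α]
  rcases le_total ξ₀ t with hξ₀t | htξ₀
  · have hd : ∀ ξ ∈ Ioi ξ₀, DifferentiableAt ℝ (deriv p) ξ := fun ξ hξ =>
      ((hC2.deriv_of_isOpen isOpen_ne (by norm_num)).differentiableOn one_ne_zero ξ
        (hξ₀.trans hξ).ne').differentiableAt (isOpen_ne.mem_nhds (hξ₀.trans hξ).ne')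
    have hmono := monotoneOn_sub_const_mul_rpow hα0 hξ₀.le
      (hC1.continuous_deriv le_rfl).continuousOn hd
      (mul_rpow_le_deriv_deriv hα0 hξ₀.le hc₁ hd hp' hp'')
      hξ₀t (show ξ₀ ≤ x + t by linarith) (by linarith)
    have hsuper := Real.add_rpow_le_rpow_add hx (hξ₀.le.trans hξ₀t) hα
    simp only at hmono
    nlinarith [mul_le_mul_of_nonneg_right hκ.1 hxα, div_pos hc₁ hα0]
  · have hx_t : c₁ * x ^ α ≤ deriv p (x + t) :=
      (mul_le_mul_of_nonneg_left (Real.rpow_le_rpow hx (by linarith) hα0.le) hc₁.le).trans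
        (hp' _ (by linarith))
    have ht_M : deriv p t ≤ M := (le_abs_self _).trans (hM t ⟨ht, htξ₀⟩)
    nlinarith [mul_le_mul_of_nonneg_right hκ.2 hxα]

theorem mul_rpow_mul_le_add_sub_sub (hα : 1 ≤ α) (hξ₀ : 0 < ξ₀) (hc₁ : 0 < c₁)
    (hodd : p.Odd) (hC1 : ContDiff ℝ 1 p) (hC2 : ContDiffOn ℝ 2 p {x | x ≠ 0})
    (hp' : ∀ ξ, ξ₀ ≤ ξ → c₁ * ξ ^ α ≤ deriv p ξ)
    (hp'' : ∀ ξ, ξ₀ ≤ ξ → c₁ * ξ ^ (α - 1) ≤ |deriv (deriv p) ξ|)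
    (hM : ∀ ξ ∈ Icc 0 ξ₀, |deriv p ξ| ≤ M) {x y : ℝ} (hx : 0 ≤ x) (hxM : 2 * M ≤ c₁ * x ^ α)
    (hy : 0 ≤ y) : c₁ / (2 * α) * x ^ α * y ≤ p (x + y) - p x - p y := by
  simpa only [hodd.map_zero, add_zero] using mul_le_add_sub_sub_of_le_deriv_sub
    (hC1.differentiable one_ne_zero) hy fun t ht =>
      mul_rpow_le_deriv_add_sub_deriv hα hξ₀ hc₁ hC1 hC2 hp' hp'' hM hx hxM ht.1.le

theorem abs_deriv_le_of_abs_le (hodd : p.Odd) (hα : 0 ≤ α) (hξ₀ : 0 ≤ ξ₀) (hC₁ : 0 ≤ C₁)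
    (hp' : ∀ ξ, ξ₀ ≤ ξ → |deriv p ξ| ≤ C₁ * ξ ^ α) (hM : ∀ ξ ∈ Icc 0 ξ₀, |deriv p ξ| ≤ M)
    {R t : ℝ} (ht : |t| ≤ R) : |deriv p t| ≤ M + C₁ * R ^ α := by
  have hM0 : 0 ≤ M := (abs_nonneg _).trans (hM 0 ⟨le_rfl, hξ₀⟩)
  have hR : 0 ≤ C₁ * R ^ α := mul_nonneg hC₁ (Real.rpow_nonneg ((abs_nonneg t).trans ht) α)
  have heven : deriv p t = deriv p |t| := by
    rcases abs_choice t with h | h <;> rw [h]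
    exact (hodd.deriv t).symm
  rw [heven]
  rcases le_total |t| ξ₀ with htξ₀ | hξ₀t
  · linarith [hM |t| ⟨abs_nonneg t, htξ₀⟩]
  · have := mul_le_mul_of_nonneg_left (Real.rpow_le_rpow (abs_nonneg t) ht hα) hC₁
    linarith [hp' |t| hξ₀t]

theorem abs_sub_le_of_abs_le (hodd : p.Odd) (hdiff : Differentiable ℝ p) (hα : 0 ≤ α)
    (hξ₀ : 0 ≤ ξ₀) (hC₁ : 0 ≤ C₁) (hp' : ∀ ξ, ξ₀ ≤ ξ → |deriv p ξ| ≤ C₁ * ξ ^ α)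
    (hM : ∀ ξ ∈ Icc 0 ξ₀, |deriv p ξ| ≤ M) {R x y : ℝ} (hx : |x| ≤ R) (hy : |y| ≤ R) :
    |p x - p y| ≤ (M + C₁ * R ^ α) * |x - y| :=
  (convex_Icc (-R) R).norm_image_sub_le_of_norm_deriv_le (fun _ _ => hdiff _)
    (fun _ hz => abs_deriv_le_of_abs_le hodd hα hξ₀ hC₁ hp' hM (abs_le.2 hz))
    (abs_le.1 hy) (abs_le.1 hx)

theorem abs_sum_le_of_abs_le (hodd : p.Odd) (hdiff : Differentiable ℝ p) (hα : 0 ≤ α)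
    (hξ₀ : 0 ≤ ξ₀) (hC₁ : 0 ≤ C₁) (hp' : ∀ ξ, ξ₀ ≤ ξ → |deriv p ξ| ≤ C₁ * ξ ^ α)
    (hM : ∀ ξ ∈ Icc 0 ξ₀, |deriv p ξ| ≤ M) {ι : Type*} (s : Finset ι) {x : ι → ℝ} {R : ℝ}
    (hx : ∀ i ∈ s, |x i| ≤ R) :
    |∑ i ∈ s, p (x i)| ≤ (M + C₁ * R ^ α) * ∑ i ∈ s, |x i| := by
  rw [Finset.mul_sum]
  refine (Finset.abs_sum_le_sum_abs _ _).trans (Finset.sum_le_sum fun i hi => ?_)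
  have hR : |(0 : ℝ)| ≤ R := by simpa using (abs_nonneg _).trans (hx i hi)
  simpa [hodd.map_zero] using abs_sub_le_of_abs_le hodd hdiff hα hξ₀ hC₁ hp' hM (hx i hi) hR

theorem mul_min_le_abs_add_add (hα : 1 ≤ α) (hξ₀ : 0 < ξ₀) (hc₁ : 0 < c₁)
    (hodd : p.Odd) (hC1 : ContDiff ℝ 1 p) (hC2 : ContDiffOn ℝ 2 p {x | x ≠ 0})
    (hp' : ∀ ξ, ξ₀ ≤ ξ → c₁ * ξ ^ α ≤ deriv p ξ)
    (hp'' : ∀ ξ, ξ₀ ≤ ξ → c₁ * ξ ^ (α - 1) ≤ |deriv (deriv p) ξ|)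
    (hM : ∀ ξ ∈ Icc 0 ξ₀, |deriv p ξ| ≤ M) {C a b w : ℝ} (hC : 1 ≤ C) (h : a + b + w = 0)
    (hab : |a| ≤ C * |b|) (haM : 2 * C ^ α * M ≤ c₁ * |a| ^ α) :
    c₁ / (2 * α) / C ^ α * |a| ^ α * min |b| |w| ≤ |p a + p b + p w| := by
  have hα0 : 0 < α := one_pos.trans_le hα
  have hκ : 0 ≤ c₁ / (2 * α) := by positivity
  have hM0 : 0 ≤ M := (abs_nonneg _).trans (hM 0 ⟨le_rfl, hξ₀.le⟩)
  have hCα : 1 ≤ C ^ α := Real.one_le_rpow hC hα0.le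
  have hpair : ∀ x y z, x + y + z = 0 → 0 ≤ x * y → 2 * M ≤ c₁ * |x| ^ α →
      c₁ / (2 * α) * |x| ^ α * |y| ≤ |p x + p y + p z| := fun x y z hxyz hxy hxM => by
    rw [hodd.abs_add_add_eq_abs_add_sub_sub hxyz hxy]
    exact (mul_rpow_mul_le_add_sub_sub hα hξ₀ hc₁ hodd hC1 hC2 hp' hp'' hM (abs_nonneg x) hxM
      (abs_nonneg y)).trans (le_abs_self _)
  have haM' : 2 * M ≤ c₁ * |a| ^ α := by nlinarith
  have hba : |a| ^ α ≤ C ^ α * |b| ^ α := by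
    rw [← Real.mul_rpow (by linarith) (abs_nonneg b)]
    exact Real.rpow_le_rpow (abs_nonneg a) hab hα0.le
  by_cases hab0 : 0 ≤ a * b
  · calc c₁ / (2 * α) / C ^ α * |a| ^ α * min |b| |w|
        ≤ c₁ / (2 * α) * |a| ^ α * |b| := by
          gcongr ?_ * _ * ?_
          · exact div_le_self hκ hCα
          · exact min_le_left _ _
      _ ≤ |p a + p b + p w| := hpair a b w h hab0 haM'
  by_cases haw : 0 ≤ a * w
  · calc c₁ / (2 * α) / C ^ α * |a| ^ α * min |b| |w|
        ≤ c₁ / (2 * α) * |a| ^ α * |w| := by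
          gcongr ?_ * _ * ?_
          · exact div_le_self hκ hCα
          · exact min_le_right _ _
      _ ≤ |p a + p w + p b| := hpair a w b (by linarith) haw haM'
      _ = |p a + p b + p w| := by ring_nf
  have hbw : 0 ≤ b * w := by
    nlinarith [mul_pos_of_neg_of_neg (not_le.1 hab0) (not_le.1 haw), sq_nonneg a]
  have hbM : 2 * M ≤ c₁ * |b| ^ α := by
    refine le_of_mul_le_mul_left ?_ (by positivity : 0 < C ^ α)
    nlinarith
  calc c₁ / (2 * α) / C ^ α * |a| ^ α * min |b| |w|
      ≤ c₁ / (2 * α) / C ^ α * (C ^ α * |b| ^ α) * |w| := by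
        gcongr
        exact min_le_right _ _
    _ = c₁ / (2 * α) * |b| ^ α * |w| := by field_simp
    _ ≤ |p b + p w + p a| := hpair b w a (by linarith) hbw hbM
    _ = |p a + p b + p w| := by ring_nf

theorem sub_le_abs_resonance (hα : 1 ≤ α) (hξ₀ : 0 < ξ₀) (hc₁ : 0 < c₁) (hodd : p.Odd)
    (hC1 : ContDiff ℝ 1 p) (hC2 : ContDiffOn ℝ 2 p {x | x ≠ 0})
    (hp' : ∀ ξ, ξ₀ ≤ ξ → c₁ * ξ ^ α ≤ deriv p ξ ∧ deriv p ξ ≤ C₁ * ξ ^ α)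
    (hp'' : ∀ ξ, ξ₀ ≤ ξ → c₁ * ξ ^ (α - 1) ≤ |deriv (deriv p) ξ|)
    (hM : ∀ ξ ∈ Icc 0 ξ₀, |deriv p ξ| ≤ M) {C c : ℝ} (hC : 1 ≤ C) (hc : 0 < c)
    {ι : Type*} (s : Finset ι) {a b r : ℝ} {x : ι → ℝ} (hsum : a + b + r + ∑ i ∈ s, x i = 0)
    (hab : |a| ≤ C * |b|) (hba : |b| ≤ C * |a|) (hrb : c * |r| ≤ |b|)
    (hx : ∑ i ∈ s, |x i| ≤ |r| / 2) (haM : 2 * C ^ α * M ≤ c₁ * |a| ^ α) :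
    c₁ / (2 * α) / C ^ α * min c (1 / 2) * |r| * |a| ^ α
        - 2 * (c₁ / 2 + C₁ * (2 * C / c) ^ α) * |a| ^ α * ∑ i ∈ s, |x i|
      ≤ |p a + p b + p r + ∑ i ∈ s, p (x i)| := by
  have hα0 : 0 < α := one_pos.trans_le hα
  have hC₁ : 0 ≤ C₁ := by
    have := (hp' ξ₀ le_rfl).1.trans (hp' ξ₀ le_rfl).2
    nlinarith [Real.rpow_pos_of_pos hξ₀ α]
  have hp'abs : ∀ ξ, ξ₀ ≤ ξ → |deriv p ξ| ≤ C₁ * ξ ^ α := fun ξ hξ => abs_le.2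
    ⟨by nlinarith [(hp' ξ hξ).1, Real.rpow_nonneg (hξ₀.le.trans hξ) α], (hp' ξ hξ).2⟩
  have hdiff : Differentiable ℝ p := hC1.differentiable one_ne_zero
  have hM0 : 0 ≤ M := (abs_nonneg _).trans (hM 0 ⟨le_rfl, hξ₀.le⟩)
  have hCα : 1 ≤ C ^ α := Real.one_le_rpow hC hα0.le
  set σ := ∑ i ∈ s, |x i|
  set w := r + ∑ i ∈ s, x i
  have hS : |∑ i ∈ s, x i| ≤ σ := Finset.abs_sum_le_sum_abs _ _
  have hw : |w - r| ≤ σ := by simpa [w] using hS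
  have hwr : |w| ≤ 2 * |r| := by linarith [abs_sub_abs_le_abs_sub w r, abs_nonneg r]
  have hmain := mul_min_le_abs_add_add hα hξ₀ hc₁ hodd hC1 hC2 (fun ξ hξ => (hp' ξ hξ).1) hp''
    hM hC (show a + b + w = 0 by linarith) hab haM
  have hmin : min c (1 / 2) * |r| ≤ min |b| |w| := le_min
    ((mul_le_mul_of_nonneg_right (min_le_left _ _) (abs_nonneg r)).trans hrb)
    ((mul_le_mul_of_nonneg_right (min_le_right _ _) (abs_nonneg r)).trans
      (by linarith [abs_sub_abs_le_abs_sub r w, abs_sub_comm w r]))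
  have hL : M + C₁ * (2 * |r|) ^ α ≤ (c₁ / 2 + C₁ * (2 * C / c) ^ α) * |a| ^ α := by
    have hr : 2 * |r| ≤ 2 * C / c * |a| := by
      rw [div_mul_eq_mul_div, le_div_iff₀ hc]; nlinarith
    have := mul_le_mul_of_nonneg_left (Real.rpow_le_rpow (by positivity) hr hα0.le) hC₁
    rw [Real.mul_rpow (by positivity) (abs_nonneg a)] at this
    nlinarith
  have herr₁ : |p w - p r| ≤ (M + C₁ * (2 * |r|) ^ α) * σ :=
    (abs_sub_le_of_abs_le hodd hdiff hα0.le hξ₀.le hC₁ hp'abs hM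
      hwr (by linarith [abs_nonneg r])).trans
      (mul_le_mul_of_nonneg_left hw (by positivity))
  have herr₂ := abs_sum_le_of_abs_le hodd hdiff hα0.le hξ₀.le hC₁ hp'abs hM s
    (x := x) (R := 2 * |r|) fun i hi => by
      linarith [Finset.single_le_sum (fun j _ => abs_nonneg (x j)) hi, abs_nonneg r]
  have hσ : 0 ≤ σ := Finset.sum_nonneg fun i _ => abs_nonneg (x i)
  have htri := abs_add_three (p a + p b + p r + ∑ i ∈ s, p (x i)) (p w - p r)
    (-∑ i ∈ s, p (x i))
  rw [abs_neg, show p a + p b + p r + ∑ i ∈ s, p (x i) + (p w - p r) + -∑ i ∈ s, p (x i)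
    = p a + p b + p w by ring] at htri
  have := mul_le_mul_of_nonneg_left hmin (by positivity : 0 ≤ c₁ / (2 * α) / C ^ α * |a| ^ α)
  nlinarith [mul_le_mul_of_nonneg_right hL hσ]

theorem exists_mul_le_abs_resonance (hα : 1 ≤ α) (hξ₀ : 0 < ξ₀) (hc₁ : 0 < c₁) (hodd : p.Odd)
    (hC1 : ContDiff ℝ 1 p) (hC2 : ContDiffOn ℝ 2 p {x | x ≠ 0})
    (hp' : ∀ ξ, ξ₀ ≤ ξ → c₁ * ξ ^ α ≤ deriv p ξ ∧ deriv p ξ ≤ C₁ * ξ ^ α)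
    (hp'' : ∀ ξ, ξ₀ ≤ ξ → c₁ * ξ ^ (α - 1) ≤ |deriv (deriv p) ξ|)
    (hM : ∀ ξ ∈ Icc 0 ξ₀, |deriv p ξ| ≤ M) {C c : ℝ} (hC : 1 ≤ C) (hc : 0 < c) :
    ∃ K ≥ (1 : ℝ), ∃ c' > (0 : ℝ), ∀ {ι : Type*} (s : Finset ι) (a b r : ℝ) (x : ι → ℝ),
      a + b + r + ∑ i ∈ s, x i = 0 → |a| ≤ C * |b| → |b| ≤ C * |a| → c * |r| ≤ |b| →
      ∑ i ∈ s, |x i| ≤ |r| / K → K * M ^ (1 / α) ≤ |a| →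
      c' * |r| * |a| ^ α ≤ |p a + p b + p r + ∑ i ∈ s, p (x i)| := by
  have hα0 : 0 < α := one_pos.trans_le hα
  have hM0 : 0 ≤ M := (abs_nonneg _).trans (hM 0 ⟨le_rfl, hξ₀.le⟩)
  set μ := c₁ / (2 * α) / C ^ α * min c (1 / 2)
  set A := c₁ / 2 + C₁ * (2 * C / c) ^ α
  have hμ : 0 < μ := by have := lt_min hc (one_half_pos (α := ℝ)); positivity
  set K := max (max 2 (2 * C ^ α / c₁)) (4 * A / μ)
  have hK2 : 2 ≤ K := (le_max_left _ _).trans (le_max_left _ _)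
  have hKthr : 2 * C ^ α / c₁ ≤ K := (le_max_right _ _).trans (le_max_left _ _)
  have hKerr : 4 * A ≤ μ * K := by
    rw [mul_comm μ]; exact (div_le_iff₀ hμ).1 (le_max_right _ _)
  refine ⟨K, by linarith, μ / 2, by positivity, fun s a b r x hsum hab hba hrb hx hbig => ?_⟩
  have hKM := mul_le_rpow_of_mul_rpow_one_div_le (by linarith) hα hM0 hbig
  have haM : 2 * C ^ α * M ≤ c₁ * |a| ^ α := by
    calc 2 * C ^ α * M = c₁ * (2 * C ^ α / c₁ * M) := by field_simp
      _ ≤ c₁ * (K * M) := by gcongr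
      _ ≤ c₁ * |a| ^ α := by gcongr
  have hKσ : K * ∑ i ∈ s, |x i| ≤ |r| := by rwa [mul_comm, ← le_div_iff₀ (by linarith)]
  have hσ : 0 ≤ ∑ i ∈ s, |x i| := Finset.sum_nonneg fun i _ => abs_nonneg (x i)
  have hmain : μ * |r| * |a| ^ α - 2 * A * |a| ^ α * ∑ i ∈ s, |x i|
      ≤ |p a + p b + p r + ∑ i ∈ s, p (x i)| :=
    sub_le_abs_resonance hα hξ₀ hc₁ hodd hC1 hC2 hp' hp'' hM hC hc s hsum hab hba hrb
      (hx.trans (div_le_div_of_nonneg_left (abs_nonneg r) two_pos hK2)) haM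
  have herr : 4 * A * ∑ i ∈ s, |x i| ≤ μ * |r| := by
    nlinarith [mul_le_mul_of_nonneg_right hKerr hσ, mul_le_mul_of_nonneg_left hKσ hμ.le]
  nlinarith [mul_le_mul_of_nonneg_right herr (Real.rpow_nonneg (abs_nonneg a) α)]

end

theorem resonance_lower_bound_1_general
    (α : ℝ) (hα1 : 1 ≤ α)
    (p : ℝ → ℝ) (ξ₀ : ℝ) (hξ₀ : 0 < ξ₀)
    (hodd : ∀ x : ℝ, p (-x) = - p x)
    (hC1 : ContDiff ℝ 1 p) (hC2 : ContDiffOn ℝ 2 p {x : ℝ | x ≠ 0})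
    (c₁ C₁ : ℝ) (hc₁ : 0 < c₁)
    (hp' : ∀ ξ : ℝ, ξ₀ ≤ ξ → c₁ * ξ ^ α ≤ deriv p ξ ∧ deriv p ξ ≤ C₁ * ξ ^ α)
    (hp'' : ∀ ξ : ℝ, ξ₀ ≤ ξ →
      c₁ * ξ ^ (α - 1) ≤ |deriv (deriv p) ξ| ∧ |deriv (deriv p) ξ| ≤ C₁ * ξ ^ (α - 1))
    (M : ℝ) (hM : ∀ ξ ∈ Set.Icc (0 : ℝ) ξ₀, |deriv p ξ| ≤ M)
    (C c : ℝ) (hC : 1 ≤ C) (hc : 0 < c) :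
    ∃ K ≥ (1 : ℝ), ∃ c' > (0 : ℝ), ∀ k : ℕ, 2 ≤ k →
      ∀ ξ : Fin (k + 2) → ℤ,
        (∑ j, ξ j) = 0 →
        |((ξ 0 : ℤ) : ℝ)| ≤ C * |((ξ 1 : ℤ) : ℝ)| →
        |((ξ 1 : ℤ) : ℝ)| ≤ C * |((ξ 0 : ℤ) : ℝ)| →
        c * |((ξ 2 : ℤ) : ℝ)| ≤ |((ξ 1 : ℤ) : ℝ)| →
        (∀ j : Fin (k + 2), 3 ≤ (j : ℕ) →
          K * k * |((ξ j : ℤ) : ℝ)| ≤ |((ξ 2 : ℤ) : ℝ)|) →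
        K * M ^ (1 / α) ≤ |((ξ 0 : ℤ) : ℝ)| →
        c' * |((ξ 2 : ℤ) : ℝ)| * |((ξ 0 : ℤ) : ℝ)| ^ α
          ≤ |∑ j, p ((ξ j : ℤ) : ℝ)| := by
  obtain ⟨K, hK, c', hc', hres⟩ := exists_mul_le_abs_resonance hα1 hξ₀ hc₁ hodd hC1 hC2 hp'
    (fun ξ hξ => (hp'' ξ hξ).1) hM hC hc
  refine ⟨K, hK, c', hc', fun k hk ξ hsum h01 h10 h12 htail hbig => ?_⟩
  obtain ⟨m, rfl⟩ : ∃ m, k = m + 1 := ⟨k - 1, by omega⟩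
  have hsumℝ : ∑ j, ((ξ j : ℤ) : ℝ) = 0 := by exact_mod_cast hsum
  rw [Fin.sum_univ_succ_succ_succ] at hsumℝ ⊢
  refine hres Finset.univ _ _ _ _ hsumℝ h01 h10 h12 ?_ hbig
  refine sum_abs_le_div_of_mul_mul_abs_le (n := ((m + 1 : ℕ) : ℝ)) (by linarith) (by positivity)
    (by simp) (abs_nonneg _) fun i => htail _ ?_
  simp [Fin.val_succ]

/-- non-resonance estimate (Lemma 4.6 of the paper) with explicit constants.
If `∑ ξ_j = 0`, `|ξ₁| ∼ |ξ₂| ≳ |ξ₃| ≫ k·max_{j≥4}|ξ_j|` and `|ξ₁|` is large enough, then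
`|∑_j p(ξ_j)| ≳ |ξ₃| |ξ₁|^α`. -/
theorem resonance_lower_bound_1
    (α : ℝ) (hα1 : 1 ≤ α) (hα2 : α ≤ 2)
    (p : ℝ → ℝ) (ξ₀ : ℝ) (hξ₀ : 0 < ξ₀)
    (hodd : ∀ x : ℝ, p (-x) = - p x)
    (hC1 : ContDiff ℝ 1 p) (hC2 : ContDiffOn ℝ 2 p {x : ℝ | x ≠ 0})
    (c₁ C₁ : ℝ) (hc₁ : 0 < c₁)
    (hp' : ∀ ξ : ℝ, ξ₀ ≤ ξ → c₁ * ξ ^ α ≤ deriv p ξ ∧ deriv p ξ ≤ C₁ * ξ ^ α)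
    (hp'' : ∀ ξ : ℝ, ξ₀ ≤ ξ →
      c₁ * ξ ^ (α - 1) ≤ |deriv (deriv p) ξ| ∧ |deriv (deriv p) ξ| ≤ C₁ * ξ ^ (α - 1))
    (M : ℝ) (hM0 : 0 ≤ M) (hM : ∀ ξ ∈ Set.Icc (0 : ℝ) ξ₀, |deriv p ξ| ≤ M)
    (C c : ℝ) (hC : 1 ≤ C) (hc : 0 < c) :
    ∃ K ≥ (1 : ℝ), ∃ c' > (0 : ℝ), ∀ k : ℕ, 2 ≤ k →
      ∀ ξ : Fin (k + 2) → ℤ,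
        (∑ j, ξ j) = 0 →
        |((ξ 0 : ℤ) : ℝ)| ≤ C * |((ξ 1 : ℤ) : ℝ)| →
        |((ξ 1 : ℤ) : ℝ)| ≤ C * |((ξ 0 : ℤ) : ℝ)| →
        c * |((ξ 2 : ℤ) : ℝ)| ≤ |((ξ 1 : ℤ) : ℝ)| →
        (∀ j : Fin (k + 2), 3 ≤ (j : ℕ) →
          K * k * |((ξ j : ℤ) : ℝ)| ≤ |((ξ 2 : ℤ) : ℝ)|) →
        K * M ^ (1 / α) ≤ |((ξ 0 : ℤ) : ℝ)| →
        c' * |((ξ 2 : ℤ) : ℝ)| * |((ξ 0 : ℤ) : ℝ)| ^ α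
          ≤ |∑ j, p ((ξ j : ℤ) : ℝ)| :=
  resonance_lower_bound_1_general α hα1 p ξ₀ hξ₀ hodd hC1 hC2 c₁ C₁ hc₁ hp' hp'' M hM C c hC hc
end

section
/- Let I, J be intervals with J ⊆ [ξ₀, ∞), and let p ∈ C²([ξ₀,∞)) satisfy c θ^{α−1} ≤ |p''(θ)| ≤ C θ^{α−1} for all θ ≥ ξ₀ with p'' continuous and of constant sign on [ξ₀,∞), where α ≥ 1. Let ξ ∈ ℤ, ξ ≥ 0, and L ≥ 1 with ξ ≥ L^{1/(α+1)} + 2ξ₀ + 2. Then the number of integers ξ₁ ∈ [ξ₀, ξ/2] with (ξ − 2ξ₁)^{α+1} ≥ L and |τ + p(ξ₁) + p(ξ − ξ₁)| ≤ A·L (for any fixed τ ∈ ℝ and constant A) is at most C' L^{1/(α+1)} for a constant C' depending only on c, C, α, A. -/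
/-!
The phase `g(t) = τ + p(t) + p(ξ - t)` has derivative `p'(t) - p'(ξ - t)`. Since `p''` has
constant sign and `|p''(θ)| ≥ c θ^(α-1)`, the function `±p'` increases on `[t, ξ - t]`, and on
the upper half of that interval by at least `c ((ξ - 2t)/2)^α ≥ c (D/2)^α`, where
`D = L^(1/(α+1))`. By the mean value theorem two admissible integers `x < y` therefore satisfy
`(y - x) c (D/2)^α ≤ |g(y) - g(x)| ≤ 2AL = 2A D^(α+1)`, so all of them lie in an interval of
length `O(D)`.
-/

open Real Set

lemma Int.ncard_le_of_forall_sub_le {S : Set ℤ} {B : ℝ} (hB : 0 ≤ B)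
    (hS : ∀ x ∈ S, ∀ y ∈ S, x < y → (y : ℝ) - x ≤ B) : (S.ncard : ℝ) ≤ B + 1 := by
  rcases S.eq_empty_or_nonempty with rfl | ⟨x₀, hx₀⟩
  · simp only [ncard_empty, CharP.cast_eq_zero]
    linarith
  have hle : ∀ x ∈ S, ∀ y ∈ S, (y : ℝ) - x ≤ B := fun x hx y hy => by
    rcases lt_or_ge x y with hxy | hxy
    · exact hS x hx y hy hxy
    · have : (y : ℝ) ≤ x := by exact_mod_cast hxy
      linarith
  have hbdd : BddBelow S := ⟨x₀ - ⌊B⌋, fun y hy => by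
    have := hle y hy x₀ hx₀
    have : x₀ - y ≤ ⌊B⌋ := Int.le_floor.mpr (by push_cast; linarith)
    linarith⟩
  set m := sInf S
  have hsub : S ⊆ Finset.Icc m (m + ⌊B⌋) := fun y hy => by
    have := hle m (Int.csInf_mem ⟨x₀, hx₀⟩ hbdd) y hy
    have : y - m ≤ ⌊B⌋ := Int.le_floor.mpr (by push_cast; linarith)
    simp only [Finset.coe_Icc, mem_Icc]
    exact ⟨csInf_le hbdd hy, by linarith⟩
  calc (S.ncard : ℝ) ≤ (Finset.Icc m (m + ⌊B⌋)).card := by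
        exact_mod_cast (ncard_le_ncard hsub).trans_eq (ncard_coe_finset _)
    _ = ⌊B⌋ + 1 := by
        rw [Int.card_Icc, show m + ⌊B⌋ + 1 - m = ⌊B⌋ + 1 by ring, ← Int.cast_natCast,
          Int.toNat_of_nonneg (by positivity)]
        push_cast; ring
    _ ≤ B + 1 := by linarith [Int.floor_le B]

lemma exists_abs_eq_mul_of_mul_nonneg {ι : Type*} {f : ι → ℝ} {S : Set ι}
    (h : ∀ x ∈ S, ∀ y ∈ S, 0 ≤ f x * f y) : ∃ s : ℝ, |s| = 1 ∧ ∀ x ∈ S, |f x| = s * f x := by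
  by_cases hneg : ∃ y ∈ S, f y < 0
  · obtain ⟨y, hy, hfy⟩ := hneg
    refine ⟨-1, by norm_num, fun x hx => ?_⟩
    have : f x ≤ 0 := by nlinarith [h x hx y hy]
    rw [abs_of_nonpos this]
    ring
  · simp only [not_exists, not_and, not_lt] at hneg
    exact ⟨1, by norm_num, fun x hx => by rw [abs_of_nonneg (hneg x hx), one_mul]⟩

lemma mul_sub_le_abs_sub_of_le_abs_deriv {g : ℝ → ℝ} {x y M : ℝ} (hxy : x ≤ y)
    (hg : ContinuousOn g (Icc x y)) (hg' : DifferentiableOn ℝ g (Ioo x y))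
    (hM : ∀ t ∈ Ioo x y, M ≤ |deriv g t|) : M * (y - x) ≤ |g y - g x| := by
  rcases hxy.eq_or_lt with rfl | hxy
  · simp
  obtain ⟨t, ht, hslope⟩ := exists_deriv_eq_slope g hxy hg hg'
  have hM' := hM t ht
  rw [hslope, abs_div, abs_of_pos (sub_pos.mpr hxy), le_div_iff₀ (sub_pos.mpr hxy)] at hM'
  exact hM'

lemma mul_rpow_half_sub_le_sub {f : ℝ → ℝ} {a c α : ℝ} (ha : 0 ≤ a) (hα : 1 ≤ α) (hc : 0 ≤ c)
    (hf : DifferentiableOn ℝ f (Ioi a)) (hf' : ∀ θ ∈ Ioi a, c * θ ^ (α - 1) ≤ deriv f θ)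
    {x y : ℝ} (hx : a < x) (hxy : x ≤ y) : c * ((y - x) / 2) ^ α ≤ f y - f x := by
  set m := (x + y) / 2 with hm_def
  have hm : a < m := by linarith
  have hmono : f x ≤ f m := by
    refine monotoneOn_of_deriv_nonneg (convex_Ioi a) hf.continuousOn
      (by rwa [interior_Ioi]) (fun θ hθ => ?_) hx hm (by linarith)
    rw [interior_Ioi] at hθ
    exact (mul_nonneg hc (rpow_nonneg (ha.trans hθ.le) _)).trans (hf' θ hθ)
  have hgrowth : c * m ^ (α - 1) * (y - m) ≤ f y - f m := by
    refine (convex_Ici m).mul_sub_le_image_sub_of_le_deriv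
      (hf.continuousOn.mono (Ici_subset_Ioi.mpr hm))
      (by rw [interior_Ici]; exact hf.mono (Ioi_subset_Ioi hm.le)) (fun θ hθ => ?_)
      m self_mem_Ici y (by rw [mem_Ici]; linarith) (by linarith)
    rw [interior_Ici] at hθ
    refine le_trans ?_ (hf' θ (hm.trans hθ))
    gcongr
    · linarith
    · exact hθ.le
  have hhalf : (y - x) / 2 ≤ m := by linarith
  calc c * ((y - x) / 2) ^ α = c * ((y - x) / 2) ^ (α - 1) * ((y - x) / 2) := by
        rw [mul_assoc, ← rpow_add_one' (by linarith) (by linarith), sub_add_cancel]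
    _ ≤ c * m ^ (α - 1) * (y - m) := by
        have : y - m = (y - x) / 2 := by ring
        rw [this]
        gcongr
    _ ≤ f y - f x := by linarith

section Curvature

variable {p : ℝ → ℝ} {a c α : ℝ}

lemma mul_rpow_half_sub_le_abs_deriv_sub (ha : 0 ≤ a) (hα : 1 ≤ α) (hc : 0 ≤ c)
    (hp : ContDiffOn ℝ 2 p (Ioi a))
    (hpp : ∀ θ ∈ Ioi a, c * θ ^ (α - 1) ≤ |deriv (deriv p) θ|)
    (hsign : ∀ θ₁ ∈ Ioi a, ∀ θ₂ ∈ Ioi a, 0 ≤ deriv (deriv p) θ₁ * deriv (deriv p) θ₂)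
    {x y : ℝ} (hx : a < x) (hxy : x ≤ y) :
    c * ((y - x) / 2) ^ α ≤ |deriv p y - deriv p x| := by
  obtain ⟨s, hs, hsr⟩ := exists_abs_eq_mul_of_mul_nonneg hsign
  have hq : DifferentiableOn ℝ (deriv p) (Ioi a) :=
    (hp.deriv_of_isOpen isOpen_Ioi (by norm_num)).differentiableOn one_ne_zero
  have hsq : ∀ θ ∈ Ioi a, c * θ ^ (α - 1) ≤ deriv (fun θ => s * deriv p θ) θ := fun θ hθ => by
    rw [deriv_const_mul _ ((hq θ hθ).differentiableAt (Ioi_mem_nhds hθ)), ← hsr θ hθ]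
    exact hpp θ hθ
  calc c * ((y - x) / 2) ^ α ≤ s * deriv p y - s * deriv p x :=
        mul_rpow_half_sub_le_sub ha hα hc (hq.const_mul s) hsq hx hxy
    _ ≤ |s * (deriv p y - deriv p x)| := by rw [mul_sub]; exact le_abs_self _
    _ = |deriv p y - deriv p x| := by rw [abs_mul, hs, one_mul]

lemma mul_sub_le_abs_phase_sub (ha : 0 ≤ a) (hα : 1 ≤ α) (hc : 0 ≤ c)
    (hp : ContDiffOn ℝ 2 p (Ici a))
    (hpp : ∀ θ ∈ Ioi a, c * θ ^ (α - 1) ≤ |deriv (deriv p) θ|)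
    (hsign : ∀ θ₁ ∈ Ioi a, ∀ θ₂ ∈ Ioi a, 0 ≤ deriv (deriv p) θ₁ * deriv (deriv p) θ₂)
    {ξ x y : ℝ} (hx : a ≤ x) (hxy : x ≤ y) (hy : 2 * y ≤ ξ) :
    c * ((ξ - 2 * y) / 2) ^ α * (y - x) ≤ |p y + p (ξ - y) - (p x + p (ξ - x))| := by
  have hp' : ∀ θ ∈ Ioi a, HasDerivAt p (deriv p θ) θ := fun θ hθ =>
    ((hp.contDiffAt (Ici_mem_nhds hθ)).differentiableAt (by norm_num)).hasDerivAt
  have hphase : ∀ t ∈ Ioo x y,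
      HasDerivAt (fun t => p t + p (ξ - t)) (deriv p t - deriv p (ξ - t)) t := fun t ht => by
    have hξt : ξ - t ∈ Ioi a := by simp only [mem_Ioi]; linarith [ht.2]
    exact ((hp' t (hx.trans_lt ht.1)).fun_add ((hp' _ hξt).comp_const_sub ξ t)).congr_deriv
      (sub_eq_add_neg _ _).symm
  refine mul_sub_le_abs_sub_of_le_abs_deriv hxy ?_
    (fun t ht => (hphase t ht).differentiableAt.differentiableWithinAt) fun t ht => ?_
  · refine (hp.continuousOn.mono ?_).add (hp.continuousOn.comp (by fun_prop) ?_) <;>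
      intro t ht <;> simp only [mem_Icc, mem_Ici] at ht ⊢ <;> linarith
  · rw [(hphase t ht).deriv, abs_sub_comm]
    calc c * ((ξ - 2 * y) / 2) ^ α ≤ c * ((ξ - t - t) / 2) ^ α := by
          rw [sub_sub, ← two_mul]
          gcongr
          exact ht.2.le
      _ ≤ |deriv p (ξ - t) - deriv p t| :=
          mul_rpow_half_sub_le_abs_deriv_sub ha hα hc (hp.mono Ioi_subset_Ici_self) hpp hsign
            (hx.trans_lt ht.1) (by linarith [ht.2])

end Curvature

theorem strichartz_counting_step_general
    (α c C A ξ₀ : ℝ) (hα : 1 ≤ α) (hc : 0 < c) (hA : 0 < A)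
    (hξ₀ : 0 ≤ ξ₀)
    (p : ℝ → ℝ) (hp : ContDiffOn ℝ 2 p (Set.Ici ξ₀))
    (hpp : ∀ θ : ℝ, ξ₀ ≤ θ →
      c * θ ^ (α - 1) ≤ |deriv (deriv p) θ| ∧ |deriv (deriv p) θ| ≤ C * θ ^ (α - 1))
    (hsign : ∀ θ₁ θ₂ : ℝ, ξ₀ ≤ θ₁ → ξ₀ ≤ θ₂ →
      0 ≤ deriv (deriv p) θ₁ * deriv (deriv p) θ₂) :
    ∃ C' > 0, ∀ (ξ : ℤ) (L τ : ℝ), 0 ≤ ξ → 1 ≤ L →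
      L ^ (1 / (α + 1)) + 2 * ξ₀ + 2 ≤ (ξ : ℝ) →
      ({ξ₁ : ℤ | ξ₀ ≤ (ξ₁ : ℝ) ∧ (ξ₁ : ℝ) ≤ (ξ : ℝ) / 2 ∧
          L ≤ ((ξ : ℝ) - 2 * (ξ₁ : ℝ)) ^ (α + 1) ∧
          |τ + p (ξ₁ : ℝ) + p ((ξ : ℝ) - (ξ₁ : ℝ))| ≤ A * L}.ncard : ℝ)
        ≤ C' * L ^ (1 / (α + 1)) := by
  refine ⟨2 ^ (α + 1) * A / c + 1, by positivity, fun ξ L τ _ hL _ => ?_⟩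
  set D := L ^ (1 / (α + 1)) with hD_def
  have hD : 1 ≤ D := one_le_rpow hL (by positivity)
  have hLD : L = D ^ α * D := by
    rw [← rpow_add_one (by positivity), hD_def, one_div, rpow_inv_rpow (by linarith) (by linarith)]
  calc _ ≤ 2 * A * L / (c * (D / 2) ^ α) + 1 := Int.ncard_le_of_forall_sub_le (by positivity) ?_
    _ = 2 ^ (α + 1) * A / c * D + 1 := by
        rw [div_rpow (by positivity) zero_le_two, rpow_add_one two_ne_zero, hLD]
        field_simp
    _ ≤ (2 ^ (α + 1) * A / c + 1) * D := by nlinarith [show 0 ≤ 2 ^ (α + 1) * A / c by positivity]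
  rintro x ⟨hx₀, -, -, hx⟩ y ⟨-, hyξ, hyL, hy⟩ hxy
  have hDy : D ≤ ξ - 2 * y := by
    rwa [hD_def, one_div, rpow_inv_le_iff_of_pos (by linarith) (by linarith) (by linarith)]
  rw [le_div_iff₀ (by positivity), mul_comm]
  calc c * (D / 2) ^ α * (y - x) ≤ c * ((ξ - 2 * y) / 2) ^ α * (y - x) := by
        gcongr
        exact sub_nonneg.mpr (by exact_mod_cast hxy.le)
    _ ≤ |p y + p (ξ - y) - (p x + p (ξ - x))| :=
        mul_sub_le_abs_phase_sub hξ₀ hα hc.le hp (fun θ hθ => (hpp θ hθ.le).1)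
          (fun θ₁ h₁ θ₂ h₂ => hsign θ₁ θ₂ h₁.le h₂.le) hx₀
          (by exact_mod_cast hxy.le) (by linarith)
    _ ≤ 2 * A * L := by
        rw [abs_le] at hx hy ⊢
        constructor <;> linarith

/-- the counting step in the proof of the bilinear Strichartz estimate:
under the stated curvature bounds on `p`, for `ξ ≥ L^{1/(α+1)} + 2ξ₀ + 2` the number of
integers `ξ₁ ∈ [ξ₀, ξ/2]` with `(ξ − 2ξ₁)^{α+1} ≥ L` and `|τ + p(ξ₁) + p(ξ−ξ₁)| ≤ A·L`
is at most `C' L^{1/(α+1)}`. -/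
theorem strichartz_counting_step
    (α c C A ξ₀ : ℝ) (hα : 1 ≤ α) (hc : 0 < c) (hCc : c ≤ C) (hA : 0 < A)
    (hξ₀ : 0 ≤ ξ₀)
    (p : ℝ → ℝ) (hp : ContDiffOn ℝ 2 p (Set.Ici ξ₀))
    (hpp : ∀ θ : ℝ, ξ₀ ≤ θ →
      c * θ ^ (α - 1) ≤ |deriv (deriv p) θ| ∧ |deriv (deriv p) θ| ≤ C * θ ^ (α - 1))
    (hsign : ∀ θ₁ θ₂ : ℝ, ξ₀ ≤ θ₁ → ξ₀ ≤ θ₂ →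
      0 ≤ deriv (deriv p) θ₁ * deriv (deriv p) θ₂)
    (hcont : ContinuousOn (deriv (deriv p)) (Set.Ici ξ₀)) :
    ∃ C' > 0, ∀ (ξ : ℤ) (L τ : ℝ), 0 ≤ ξ → 1 ≤ L →
      L ^ (1 / (α + 1)) + 2 * ξ₀ + 2 ≤ (ξ : ℝ) →
      ({ξ₁ : ℤ | ξ₀ ≤ (ξ₁ : ℝ) ∧ (ξ₁ : ℝ) ≤ (ξ : ℝ) / 2 ∧
          L ≤ ((ξ : ℝ) - 2 * (ξ₁ : ℝ)) ^ (α + 1) ∧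
          |τ + p (ξ₁ : ℝ) + p ((ξ : ℝ) - (ξ₁ : ℝ))| ≤ A * L}.ncard : ℝ)
        ≤ C' * L ^ (1 / (α + 1)) :=
  strichartz_counting_step_general α c C A ξ₀ hα hc hA hξ₀ p hp hpp hsign
end
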